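/- arXiv:2504.13548 — 6 statements merged into one kernel-verified Lean document; each statement's English description precedes it below -/
import Mathlib

section
/- For q_1, q_2 in ℝ^K with q_1 ≠ q_2 and any δ with 0 ≤ δ < ‖q_1 - q_2‖², the minimizers (p_1*, p_2*) of ‖p_1 - q_1‖² + ‖p_2 - q_2‖² subject to ‖p_1 - p_2‖² ≤ δ lie on the segment joining q_1 and q_2, are symmetric in the sense p_1* = λ*q_1 + (1-λ*)q_2 and p_2* = λ*q_2 + (1-λ*)q_1 with λ* = (1 + √(δ/‖q_1-q_2‖²))/2, and satisfy ‖p_1* - q_1‖² = ‖p_2* - q_2‖². -/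
lemma stmt_2_aux (A B m : ℝ) (hm : 0 ≤ m) (h1 : A ^ 2 + B ^ 2 ≤ 2 * m ^ 2)
    (h2 : 2 * m ≤ A + B) : A = m ∧ B = m := by
  have e1 : A + B ≤ 2 * m := by nlinarith [sq_nonneg (A - B)]
  have e2 : A + B = 2 * m := le_antisymm e1 h2
  have e3 : (A - B) ^ 2 = 0 := by nlinarith [sq_nonneg (A - B)]
  have e4 : A = B := by
    have := sq_eq_zero_iff.mp e3
    linarith
  constructor <;> linarith

set_option maxHeartbeats 2000000 in
theorem stmt_2 {K : ℕ} (q1 q2 : EuclideanSpace ℝ (Fin K)) (hq : q1 ≠ q2)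
    (δ : ℝ) (hδ0 : 0 ≤ δ) (hδ : δ < ‖q1 - q2‖ ^ 2)
    (p1 p2 : EuclideanSpace ℝ (Fin K))
    (hfeas : ‖p1 - p2‖ ^ 2 ≤ δ)
    (hmin : IsMinOn
      (fun p : EuclideanSpace ℝ (Fin K) × EuclideanSpace ℝ (Fin K) =>
        ‖p.1 - q1‖ ^ 2 + ‖p.2 - q2‖ ^ 2)
      {p : EuclideanSpace ℝ (Fin K) × EuclideanSpace ℝ (Fin K) | ‖p.1 - p.2‖ ^ 2 ≤ δ}
      (p1, p2)) :
    p1 = ((1 + Real.sqrt (δ / ‖q1 - q2‖ ^ 2)) / 2) • q1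
          + (1 - (1 + Real.sqrt (δ / ‖q1 - q2‖ ^ 2)) / 2) • q2 ∧
    p2 = ((1 + Real.sqrt (δ / ‖q1 - q2‖ ^ 2)) / 2) • q2
          + (1 - (1 + Real.sqrt (δ / ‖q1 - q2‖ ^ 2)) / 2) • q1 ∧
    ‖p1 - q1‖ ^ 2 = ‖p2 - q2‖ ^ 2 := by
  set c : EuclideanSpace ℝ (Fin K) := q1 - q2 with hc_def
  have hn0 : 0 < ‖c‖ := by
    rw [norm_pos_iff]
    exact sub_ne_zero_of_ne hq
  set n : ℝ := ‖c‖ with hn_def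
  set s : ℝ := Real.sqrt δ with hs_def
  have hs0 : 0 ≤ s := Real.sqrt_nonneg δ
  have hs2 : s ^ 2 = δ := Real.sq_sqrt hδ0
  have hsn : s < n := by nlinarith
  have hlam : Real.sqrt (δ / n ^ 2) = s / n := by
    rw [Real.sqrt_div hδ0, Real.sqrt_sq hn0.le]
  set t : ℝ := (n - s) / (2 * n) with ht_def
  have ht0 : 0 ≤ t := by
    apply div_nonneg <;> linarith
  have htn : t * n = (n - s) / 2 := by
    rw [ht_def, div_mul_eq_mul_div, div_eq_div_iff (mul_ne_zero two_ne_zero hn0.ne') two_ne_zero]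
    ring
  -- candidate point
  set P1 : EuclideanSpace ℝ (Fin K) := q1 - t • c with hP1_def
  set P2 : EuclideanSpace ℝ (Fin K) := q2 + t • c with hP2_def
  have hP12 : P1 - P2 = (1 - 2 * t) • c := by
    rw [hP1_def, hP2_def, hc_def]
    module
  have h12t : 1 - 2 * t = s / n := by
    rw [eq_div_iff hn0.ne']
    linear_combination (-2) * htn
  have hmemP : ‖P1 - P2‖ ^ 2 ≤ δ := by
    rw [hP12, norm_smul, h12t]
    rw [Real.norm_eq_abs, abs_of_nonneg (by positivity)]
    rw [mul_pow, div_pow]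
    rw [div_mul_cancel₀]
    · linarith
    · positivity
  have hub := isMinOn_iff.mp hmin (P1, P2) hmemP
  simp only [hP1_def, hP2_def] at hub
  have hPv1 : q1 - t • c - q1 = (-t) • c := by module
  have hPv2 : q2 + t • c - q2 = t • c := by module
  rw [hPv1, hPv2] at hub
  have hnorm_tc : ‖t • c‖ = t * n := by
    rw [norm_smul, Real.norm_eq_abs, abs_of_nonneg ht0]
  have hnorm_ntc : ‖(-t) • c‖ = t * n := by
    rw [norm_smul, Real.norm_eq_abs, abs_neg, abs_of_nonneg ht0]
  rw [hnorm_tc, hnorm_ntc, htn] at hub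
  set a : EuclideanSpace ℝ (Fin K) := p1 - q1 with ha_def
  set b : EuclideanSpace ℝ (Fin K) := p2 - q2 with hb_def
  have hdecomp : p1 - p2 = a - b + c := by
    rw [ha_def, hb_def, hc_def]
    module
  have h1 : ‖p1 - p2‖ ≤ s := by
    nlinarith [norm_nonneg (p1 - p2)]
  have h2 : n ≤ ‖p1 - p2‖ + ‖a - b‖ := by
    have hcc : c = (p1 - p2) + (b - a) := by
      rw [hdecomp]; module
    calc n = ‖(p1 - p2) + (b - a)‖ := by rw [hn_def, hcc]
    _ ≤ ‖p1 - p2‖ + ‖b - a‖ := norm_add_le _ _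
    _ = ‖p1 - p2‖ + ‖a - b‖ := by rw [norm_sub_rev b a]
  have h3 : ‖a - b‖ ≤ ‖a‖ + ‖b‖ := norm_sub_le _ _
  have hABge : 2 * ((n - s) / 2) ≤ ‖a‖ + ‖b‖ := by linarith
  have hm0 : (0:ℝ) ≤ (n - s) / 2 := by linarith
  obtain ⟨hA, hB⟩ := stmt_2_aux ‖a‖ ‖b‖ ((n - s) / 2) hm0 (by linarith) hABge
  have hab : ‖a - b‖ = n - s := by
    have hge : n - s ≤ ‖a - b‖ := by linarith
    linarith
  have hba : b = -a := by
    have hpar := parallelogram_law_with_norm ℝ a b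
    have hx : ‖a + b‖ * ‖a + b‖ = 0 := by nlinarith
    have hz : a + b = 0 := by
      have := mul_self_eq_zero.mp hx
      exact norm_eq_zero.mp this
    rw [eq_neg_iff_add_eq_zero, add_comm]; exact hz
  -- feasibility holds with equality
  have hps : ‖p1 - p2‖ = s := by
    have : n - ‖a - b‖ ≤ ‖p1 - p2‖ := by linarith
    linarith [hab]
  have hp12 : p1 - p2 = (2:ℝ) • a + c := by
    rw [hdecomp, hba]; module
  -- extract inner product
  have hip : inner ℝ a c = (s * n - n ^ 2) / 2 := by
    have he : ‖(2:ℝ) • a + c‖ ^ 2 = δ := by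
      rw [← hp12]
      nlinarith [hps]
    rw [norm_add_sq_real, norm_smul, real_inner_smul_left] at he
    rw [Real.norm_eq_abs] at he
    rw [show |(2:ℝ)| = 2 by norm_num] at he
    rw [hA] at he
    rw [← hn_def] at he
    nlinarith [he]
  -- conclude a = -t • c
  have hatc : a = (-t) • c := by
    have h0 : ‖a + t • c‖ ^ 2 = 0 := by
      rw [norm_add_sq_real, real_inner_smul_right, norm_smul,
        Real.norm_eq_abs, abs_of_nonneg ht0, hip, hA, ← hn_def]
      have hne : (2:ℝ) * n ≠ 0 := by positivity
      rw [ht_def]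
      field_simp
      ring
    have hz : a + t • c = 0 := by
      have := pow_eq_zero_iff (n := 2) (by norm_num) |>.mp h0
      exact norm_eq_zero.mp this
    have : a = -(t • c) := by
      rw [← neg_eq_of_add_eq_zero_left hz]
    rw [this, neg_smul]
  have hbtc : b = t • c := by rw [hba, hatc]; module
  rw [hlam]
  have e1 : (1 + s / n) / 2 = 1 - t := by
    rw [ht_def]; field_simp; ring
  have e2 : 1 - (1 + s / n) / 2 = t := by
    rw [ht_def]; field_simp; ring
  rw [e2, e1]
  refine ⟨?_, ?_, ?_⟩
  · have hp1 : p1 = q1 + (-t) • c := by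
      rw [← hatc, ha_def]; module
    rw [hp1, hc_def]; module
  · have hp2 : p2 = q2 + t • c := by
      rw [← hbtc, hb_def]; module
    rw [hp2, hc_def]; module
  · rw [hA, hB]
end

section
/- For any q_1, q_2 ∈ ℝ^K and any δ ≥ 0, if (p_1*, p_2*) minimizes ‖p_1 - q_1‖² + ‖p_2 - q_2‖² subject to ‖p_1 - p_2‖² ≤ δ, then ‖p_1* - q_1‖² = ‖p_2* - q_2‖² (the L2 loss is confidence-balanced). -/
theorem stmt_3 {K : ℕ} (q1 q2 : EuclideanSpace ℝ (Fin K))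
    (δ : ℝ) (hδ0 : 0 ≤ δ)
    (p1 p2 : EuclideanSpace ℝ (Fin K))
    (hfeas : ‖p1 - p2‖ ^ 2 ≤ δ)
    (hmin : IsMinOn
      (fun p : EuclideanSpace ℝ (Fin K) × EuclideanSpace ℝ (Fin K) =>
        ‖p.1 - q1‖ ^ 2 + ‖p.2 - q2‖ ^ 2)
      {p : EuclideanSpace ℝ (Fin K) × EuclideanSpace ℝ (Fin K) | ‖p.1 - p.2‖ ^ 2 ≤ δ}
      (p1, p2)) :
    ‖p1 - q1‖ ^ 2 = ‖p2 - q2‖ ^ 2 := by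
  set a : EuclideanSpace ℝ (Fin K) := p1 - q1 with ha
  set b : EuclideanSpace ℝ (Fin K) := p2 - q2 with hb
  set v : EuclideanSpace ℝ (Fin K) := (-(1/2 : ℝ)) • (a + b) with hv
  have hfeas' : (p1 + v, p2 + v) ∈
      {p : EuclideanSpace ℝ (Fin K) × EuclideanSpace ℝ (Fin K) | ‖p.1 - p.2‖ ^ 2 ≤ δ} := by
    simpa [add_sub_add_right_eq_sub] using hfeas
  have key := hmin hfeas'
  simp only [Set.mem_setOf_eq] at key
  have h1 : (p1 + v) - q1 = a + v := by rw [ha]; abel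
  have h2 : (p2 + v) - q2 = b + v := by rw [hb]; abel
  rw [h1, h2, ← ha, ← hb] at key
  have e1 : ‖a + v‖ ^ 2 = ‖a‖ ^ 2 + 2 * inner ℝ a v + ‖v‖ ^ 2 := norm_add_sq_real a v
  have e2 : ‖b + v‖ ^ 2 = ‖b‖ ^ 2 + 2 * inner ℝ b v + ‖v‖ ^ 2 := norm_add_sq_real b v
  have hsum : (inner ℝ a (a + b) : ℝ) + inner ℝ b (a + b) = ‖a + b‖ ^ 2 := by
    have h := real_inner_self_eq_norm_sq (a + b)
    rw [inner_add_left] at h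
    linarith
  have hav : (inner ℝ a v : ℝ) + inner ℝ b v = -(1/2) * ‖a + b‖ ^ 2 := by
    rw [hv, real_inner_smul_right, real_inner_smul_right]
    linarith
  have hvn : ‖v‖ ^ 2 = (1/4) * ‖a + b‖ ^ 2 := by
    rw [hv, norm_smul, Real.norm_eq_abs, abs_neg, abs_div, mul_pow]
    norm_num
  have habz : ‖a + b‖ ^ 2 ≤ 0 := by linarith [key, e1, e2, hav, hvn]
  have hab : a + b = 0 := by
    have h0 := sq_nonneg ‖a + b‖
    have h1 : ‖a + b‖ ^ 2 = 0 := le_antisymm habz h0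
    have h2 : ‖a + b‖ = 0 := by
      exact pow_eq_zero_iff (by norm_num) |>.mp h1
    exact norm_eq_zero.mp h2
  have hn : ‖a‖ = ‖b‖ := by
    have h : a = -b := eq_neg_of_add_eq_zero_left hab
    rw [h, norm_neg]
  rw [hn]
end

section
/- Fix w ∈ [1/2, 1) and define T_1(x) = w·log(w-x) - (1/2)·log(1/2 - x) and T_2(x) = (1/2)·log(1/2 + x) - (1-w)·log(1-w+x) for x ∈ [0, min(w, 1/2)). Then T_1 and T_2 are both nondecreasing in x, and T_1(x) + T_2(x) ≥ w·log w - (1-w)·log(1-w) ≥ 0 for all admissible x. -/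
theorem stmt_9 (w : ℝ) (hw1 : 1 / 2 ≤ w) (hw2 : w < 1) :
    MonotoneOn (fun x : ℝ => w * Real.log (w - x) - (1 / 2) * Real.log (1 / 2 - x))
      (Set.Ico 0 (min w (1 / 2))) ∧
    MonotoneOn (fun x : ℝ => (1 / 2) * Real.log (1 / 2 + x) - (1 - w) * Real.log (1 - w + x))
      (Set.Ico 0 (min w (1 / 2))) ∧
    ∀ x ∈ Set.Ico (0 : ℝ) (min w (1 / 2)),
      w * Real.log w - (1 - w) * Real.log (1 - w) ≤
        (w * Real.log (w - x) - (1 / 2) * Real.log (1 / 2 - x)) +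
        ((1 / 2) * Real.log (1 / 2 + x) - (1 - w) * Real.log (1 - w + x)) ∧
      0 ≤ w * Real.log w - (1 - w) * Real.log (1 - w) := by
  have hm : min w (1 / 2) = 1 / 2 := min_eq_right hw1
  rw [hm]
  have h0w : (0:ℝ) < w := by linarith
  have hbw : (0:ℝ) < 1 - w := by linarith
  -- derivative facts for T1
  have hd1 : ∀ x : ℝ, x < 1/2 →
      HasDerivAt (fun x : ℝ => w * Real.log (w - x) - (1 / 2) * Real.log (1 / 2 - x))
        (w * ((w - x)⁻¹ * (-1)) - (1/2) * ((1/2 - x)⁻¹ * (-1))) x := by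
    intro x hx
    have hxw : x < w := lt_of_lt_of_le hx hw1
    have hA : HasDerivAt (fun y : ℝ => w - y) (-1) x := (hasDerivAt_id x).const_sub w
    have hB : HasDerivAt (fun y : ℝ => 1/2 - y) (-1) x := (hasDerivAt_id x).const_sub (1/2)
    have hlA : HasDerivAt (fun y : ℝ => Real.log (w - y)) ((w - x)⁻¹ * (-1)) x :=
      (Real.hasDerivAt_log (by linarith)).comp x hA
    have hlB : HasDerivAt (fun y : ℝ => Real.log (1/2 - y)) ((1/2 - x)⁻¹ * (-1)) x :=
      (Real.hasDerivAt_log (by linarith)).comp x hB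
    exact (hlA.const_mul w).sub (hlB.const_mul (1/2))
  -- derivative facts for T2
  have hd2 : ∀ x : ℝ, 0 < 1/2 + x → 0 < 1 - w + x →
      HasDerivAt (fun x : ℝ => (1/2) * Real.log (1/2 + x) - (1 - w) * Real.log (1 - w + x))
        ((1/2) * ((1/2 + x)⁻¹ * 1) - (1 - w) * ((1 - w + x)⁻¹ * 1)) x := by
    intro x h1 h2
    have hA : HasDerivAt (fun y : ℝ => 1/2 + y) 1 x := (hasDerivAt_id x).const_add (1/2)
    have hB : HasDerivAt (fun y : ℝ => 1 - w + y) 1 x := (hasDerivAt_id x).const_add (1 - w)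
    have hlA : HasDerivAt (fun y : ℝ => Real.log (1/2 + y)) ((1/2 + x)⁻¹ * 1) x :=
      (Real.hasDerivAt_log (ne_of_gt h1)).comp x hA
    have hlB : HasDerivAt (fun y : ℝ => Real.log (1 - w + y)) ((1 - w + x)⁻¹ * 1) x :=
      (Real.hasDerivAt_log (ne_of_gt h2)).comp x hB
    exact (hlA.const_mul (1/2)).sub (hlB.const_mul (1 - w))
  have hint : interior (Set.Ico (0:ℝ) (1/2)) = Set.Ioo 0 (1/2) := interior_Ico
  have mono1 : MonotoneOn (fun x : ℝ => w * Real.log (w - x) - (1 / 2) * Real.log (1 / 2 - x))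
      (Set.Ico 0 (1 / 2)) := by
    apply monotoneOn_of_deriv_nonneg (convex_Ico 0 (1/2))
    · intro x hx
      exact ((hd1 x hx.2).continuousAt).continuousWithinAt
    · rw [hint]
      intro x hx
      exact (hd1 x hx.2).differentiableAt.differentiableWithinAt
    · rw [hint]
      intro x hx
      rw [(hd1 x hx.2).deriv]
      have hx0 := hx.1
      have hx2 := hx.2
      have hxw : x < w := lt_of_lt_of_le hx2 hw1
      have key : w * ((w - x)⁻¹ * (-1)) - (1/2) * ((1/2 - x)⁻¹ * (-1))
          = (1/2) / (1/2 - x) - w / (w - x) := by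
        rw [div_eq_mul_inv, div_eq_mul_inv]; ring
      rw [key, sub_nonneg, div_le_div_iff₀ (by linarith) (by linarith)]
      nlinarith
  have mono2 : MonotoneOn (fun x : ℝ => (1 / 2) * Real.log (1 / 2 + x) - (1 - w) * Real.log (1 - w + x))
      (Set.Ico 0 (1 / 2)) := by
    apply monotoneOn_of_deriv_nonneg (convex_Ico 0 (1/2))
    · intro x hx
      exact ((hd2 x (by linarith [hx.1]) (by linarith [hx.1])).continuousAt).continuousWithinAt
    · rw [hint]
      intro x hx
      exact (hd2 x (by linarith [hx.1]) (by linarith [hx.1])).differentiableAt.differentiableWithinAt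
    · rw [hint]
      intro x hx
      have hx0 := hx.1
      have h1 : (0:ℝ) < 1/2 + x := by linarith
      have h2 : (0:ℝ) < 1 - w + x := by linarith
      rw [(hd2 x h1 h2).deriv]
      have key : (1/2) * ((1/2 + x)⁻¹ * 1) - (1 - w) * ((1 - w + x)⁻¹ * 1)
          = (1 - w) / (1 - w + x) - (1 - w) / (1 - w + x)
            + ((1/2) / (1/2 + x) - (1 - w) / (1 - w + x)) := by
        rw [div_eq_mul_inv, div_eq_mul_inv, div_eq_mul_inv]; ring
      rw [key]
      have : (1 - w) / (1 - w + x) ≤ (1/2) / (1/2 + x) := by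
        rw [div_le_div_iff₀ (by linarith) (by linarith)]
        nlinarith
      linarith
  refine ⟨mono1, mono2, ?_⟩
  intro x hx
  have h0mem : (0:ℝ) ∈ Set.Ico (0:ℝ) (1/2) := ⟨le_refl 0, by norm_num⟩
  have hval : w * Real.log w - (1 - w) * Real.log (1 - w) =
      (w * Real.log (w - 0) - (1 / 2) * Real.log (1 / 2 - 0)) +
      ((1 / 2) * Real.log (1 / 2 + 0) - (1 - w) * Real.log (1 - w + 0)) := by
    norm_num
  have hle1 := mono1 h0mem hx hx.1
  have hle2 := mono2 h0mem hx hx.1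
  simp only at hle1 hle2
  constructor
  · calc w * Real.log w - (1 - w) * Real.log (1 - w)
        = (w * Real.log (w - 0) - (1 / 2) * Real.log (1 / 2 - 0)) +
          ((1 / 2) * Real.log (1 / 2 + 0) - (1 - w) * Real.log (1 - w + 0)) := hval
      _ ≤ (w * Real.log (w - x) - (1 / 2) * Real.log (1 / 2 - x)) +
          ((1 / 2) * Real.log (1 / 2 + x) - (1 - w) * Real.log (1 - w + x)) :=
        add_le_add hle1 hle2
  · -- 0 ≤ w log w - (1-w) log (1-w)
    set a := w
    set b := 1 - w with hb
    have ha : (0:ℝ) < a := h0w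
    have hb0 : (0:ℝ) < b := hbw
    have hba : b ≤ a := by simp only [hb]; linarith
    have key1 : Real.log (b / a) ≤ b / a - 1 := Real.log_le_sub_one_of_pos (by positivity)
    have key2 : Real.log (a⁻¹) ≤ a⁻¹ - 1 := Real.log_le_sub_one_of_pos (by positivity)
    have e1 : Real.log (b / a) = Real.log b - Real.log a := Real.log_div hb0.ne' ha.ne'
    have e2 : Real.log (a⁻¹) = - Real.log a := Real.log_inv a
    rw [e1] at key1
    rw [e2] at key2
    -- multiply key1 by a, key2 by a
    have k1 : a * Real.log b - a * Real.log a ≤ b - a := by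
      have h := mul_le_mul_of_nonneg_left key1 ha.le
      have hf : a * (b / a - 1) = b - a := by field_simp
      rw [hf, mul_sub] at h
      exact h
    have k2 : a - 1 ≤ a * Real.log a := by
      have h := mul_le_mul_of_nonneg_left key2 ha.le
      have hf : a * (a⁻¹ - 1) = 1 - a := by field_simp
      rw [hf, mul_neg] at h
      linarith
    have hab1 : a + b = 1 := by show w + (1 - w) = 1; ring
    have m1 := mul_le_mul_of_nonneg_left k1 hb0.le
    have m2 := mul_le_mul_of_nonneg_left k2 (sub_nonneg.mpr hba)
    have hmain : 0 ≤ a * (a * Real.log a - b * Real.log b) := by nlinarith [m1, m2]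
    have hdiv : 0 ≤ a * (a * Real.log a - b * Real.log b) / a := div_nonneg hmain ha.le
    rwa [mul_div_cancel_left₀ _ ha.ne'] at hdiv
end

section
/- Fix x ∈ (0, 1/2) and define F(w) = (1-w)·(1/2 - x)/(1/2 + x) - w·(1-w+x)/(w-x) + (1/2)·(1/2 + x)/(1/2 - x) - (1/2)·(1/2 - x)/(1/2 + x) for w ∈ [1/2, 1) with w > x. Then F is strictly increasing in w on this range and F(1/2) = 0; hence F(w) > 0 for all w ∈ (1/2, 1). -/
theorem stmt_10 (x : ℝ) (hx1 : 0 < x) (hx2 : x < 1 / 2) :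
    StrictMonoOn
      (fun w : ℝ => (1 - w) * ((1 / 2 - x) / (1 / 2 + x)) - w * ((1 - w + x) / (w - x))
        + (1 / 2) * ((1 / 2 + x) / (1 / 2 - x)) - (1 / 2) * ((1 / 2 - x) / (1 / 2 + x)))
      (Set.Ico (1 / 2 : ℝ) 1) ∧
    ((1 - (1 / 2 : ℝ)) * ((1 / 2 - x) / (1 / 2 + x))
        - (1 / 2) * ((1 - (1 / 2 : ℝ) + x) / ((1 / 2 : ℝ) - x))
        + (1 / 2) * ((1 / 2 + x) / (1 / 2 - x)) - (1 / 2) * ((1 / 2 - x) / (1 / 2 + x)) = 0) ∧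
    ∀ w ∈ Set.Ioo (1 / 2 : ℝ) 1,
      0 < (1 - w) * ((1 / 2 - x) / (1 / 2 + x)) - w * ((1 - w + x) / (w - x))
        + (1 / 2) * ((1 / 2 + x) / (1 / 2 - x)) - (1 / 2) * ((1 / 2 - x) / (1 / 2 + x)) := by
  have hp : (0:ℝ) < 1 / 2 + x := by linarith
  have hm : (0:ℝ) < 1 / 2 - x := by linarith
  have hmono : StrictMonoOn
      (fun w : ℝ => (1 - w) * ((1 / 2 - x) / (1 / 2 + x)) - w * ((1 - w + x) / (w - x))
        + (1 / 2) * ((1 / 2 + x) / (1 / 2 - x)) - (1 / 2) * ((1 / 2 - x) / (1 / 2 + x)))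
      (Set.Ico (1 / 2 : ℝ) 1) := by
    intro a ha b hb hab
    have hax : 0 < a - x := by have := ha.1; linarith
    have hbx : 0 < b - x := by have := hb.1; linarith
    simp only
    rw [show ∀ u v : ℝ, u < v ↔ 0 < v - u from fun u v => (sub_pos).symm]
    have key : ((1 - b) * ((1 / 2 - x) / (1 / 2 + x)) - b * ((1 - b + x) / (b - x))
        + (1 / 2) * ((1 / 2 + x) / (1 / 2 - x)) - (1 / 2) * ((1 / 2 - x) / (1 / 2 + x)))
        - ((1 - a) * ((1 / 2 - x) / (1 / 2 + x)) - a * ((1 - a + x) / (a - x))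
        + (1 / 2) * ((1 / 2 + x) / (1 / 2 - x)) - (1 / 2) * ((1 / 2 - x) / (1 / 2 + x)))
        = (b - a) * (2 * x / (1 / 2 + x)) + (x / (a - x) - x / (b - x)) := by
      field_simp
      ring
    rw [key]
    have h1 : 0 < (b - a) * (2 * x / (1 / 2 + x)) := mul_pos (by linarith) (by positivity)
    have h2 : 0 ≤ x / (a - x) - x / (b - x) := by
      rw [sub_nonneg, div_le_div_iff₀ hbx hax]
      nlinarith
    linarith
  refine ⟨hmono, ?_, ?_⟩
  · field_simp
    ring
  · intro w hw
    have h0 : (1/2 : ℝ) ∈ Set.Ico (1/2:ℝ) 1 := by constructor <;> norm_num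
    have hw' : w ∈ Set.Ico (1/2:ℝ) 1 := ⟨le_of_lt hw.1, hw.2⟩
    have := hmono h0 hw' hw.1
    simp only at this
    have heq : (1 - (1 / 2 : ℝ)) * ((1 / 2 - x) / (1 / 2 + x))
        - (1 / 2) * ((1 - (1 / 2 : ℝ) + x) / ((1 / 2 : ℝ) - x))
        + (1 / 2) * ((1 / 2 + x) / (1 / 2 - x)) - (1 / 2) * ((1 / 2 - x) / (1 / 2 + x)) = 0 := by
      field_simp
      ring
    calc (0:ℝ) = _ := heq.symm
      _ < _ := by convert this using 3 <;> norm_num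
end

section
/- Define μ(w, x) = (1-w)·[ (w+x)/(1-w-x) - log(1-w-x) ] - w·[ (1-w-x)/(w+x) - log(w+x) ] for w ∈ [1/2, 1) and x with 0 < w + x < 1. Then for all w ∈ (1/2, 1) and all x ∈ (0, 1-w): μ(w, x) > μ(1/2, x). -/
noncomputable def mu (w x : ℝ) : ℝ :=
  (1 - w) * ((w + x) / (1 - w - x) - Real.log (1 - w - x))
    - w * ((1 - w - x) / (w + x) - Real.log (w + x))

lemma neg_inv_le_log (s : ℝ) (hs : 0 < s) : -(1 / (Real.exp 1 * s)) ≤ Real.log s := by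
  have he : (0:ℝ) < Real.exp 1 := Real.exp_pos 1
  have h := Real.log_le_sub_one_of_pos (show (0:ℝ) < s⁻¹ / Real.exp 1 by positivity)
  rw [Real.log_div (by positivity) (ne_of_gt he), Real.log_inv, Real.log_exp] at h
  have h2 : s⁻¹ / Real.exp 1 = 1 / (Real.exp 1 * s) := by
    field_simp
  linarith [h2 ▸ h]

lemma mu_hasDeriv (x w : ℝ) (h1 : 0 < w + x) (h2 : w + x < 1) :
    HasDerivAt (fun t => mu t x)
      (-((w + x) / (1 - w - x) - Real.log (1 - w - x))
        + (1 - w) * (1 / (1 - w - x) ^ 2 + 1 / (1 - w - x))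
        - ((1 - w - x) / (w + x) - Real.log (w + x))
        + w * (1 / (w + x) ^ 2 + 1 / (w + x))) w := by
  have hb : (0:ℝ) < 1 - w - x := by linarith
  have hbne : 1 - w - x ≠ 0 := ne_of_gt hb
  have hane : w + x ≠ 0 := ne_of_gt h1
  have hA : HasDerivAt (fun t : ℝ => t + x) 1 w := (hasDerivAt_id w).add_const x
  have hB : HasDerivAt (fun t : ℝ => 1 - t - x) (-1) w := by
    have h := ((hasDerivAt_id w).const_sub 1).sub_const x
    simpa using h
  have hlogb : HasDerivAt (fun t : ℝ => Real.log (1 - t - x)) ((1 - w - x)⁻¹ * (-1)) w :=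
    by have := (Real.hasDerivAt_log hbne).comp w hB; exact this
  have hloga : HasDerivAt (fun t : ℝ => Real.log (t + x)) ((w + x)⁻¹ * 1) w :=
    by have := (Real.hasDerivAt_log hane).comp w hA; exact this
  have hdiv1 : HasDerivAt (fun t : ℝ => (t + x) / (1 - t - x))
      ((1 * (1 - w - x) - (w + x) * (-1)) / (1 - w - x) ^ 2) w := hA.div hB hbne
  have hdiv2 : HasDerivAt (fun t : ℝ => (1 - t - x) / (t + x))
      (((-1) * (w + x) - (1 - w - x) * 1) / (w + x) ^ 2) w := hB.div hA hane
  have hone : HasDerivAt (fun t : ℝ => 1 - t) (-1) w := by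
    simpa using (hasDerivAt_id w).const_sub 1
  have hP : HasDerivAt
      (fun t : ℝ => (1 - t) * ((t + x) / (1 - t - x) - Real.log (1 - t - x)))
      ((-1) * ((w + x) / (1 - w - x) - Real.log (1 - w - x))
        + (1 - w) * ((1 * (1 - w - x) - (w + x) * (-1)) / (1 - w - x) ^ 2
            - (1 - w - x)⁻¹ * (-1))) w :=
    hone.mul (hdiv1.sub hlogb)
  have hQ : HasDerivAt
      (fun t : ℝ => t * ((1 - t - x) / (t + x) - Real.log (t + x)))
      (1 * ((1 - w - x) / (w + x) - Real.log (w + x))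
        + w * (((-1) * (w + x) - (1 - w - x) * 1) / (w + x) ^ 2 - (w + x)⁻¹ * 1)) w :=
    (hasDerivAt_id w).mul (hdiv2.sub hloga)
  have h := hP.sub hQ
  have heq : (fun t : ℝ => (1 - t) * ((t + x) / (1 - t - x) - Real.log (1 - t - x))
      - t * ((1 - t - x) / (t + x) - Real.log (t + x))) = fun t => mu t x := by
    funext t; simp [mu]
  simp only [Pi.sub_def] at h
  rw [heq] at h
  convert h using 1
  case e'_9 =>
    field_simp
    ring
  all_goals rfl

lemma case_one (x a s : ℝ) (hx : 0 < x) (ha2 : 1 / 2 < a) (hs : 1 / 16 ≤ s)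
    (hdiff : 0 < a - s) (hspos : 0 < s) :
    0 < 4 + Real.log a + Real.log s + x * (a - s) * (1 + a * s) / (a ^ 2 * s ^ 2) := by
  have hterm : 0 ≤ x * (a - s) * (1 + a * s) / (a ^ 2 * s ^ 2) := by
    apply div_nonneg _ (by positivity)
    have hpos : (0:ℝ) < 1 + a * s := by nlinarith
    exact mul_nonneg (mul_nonneg hx.le hdiff.le) hpos.le
  have hla : Real.log (1 / 2) ≤ Real.log a := Real.log_le_log (by norm_num) (by linarith)
  have hlb : Real.log (1 / 16) ≤ Real.log s := Real.log_le_log (by norm_num) hs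
  have h2 : Real.log 2 < 0.6931471808 := Real.log_two_lt_d9
  have e1 : Real.log (1 / 2 : ℝ) = -Real.log 2 := by
    rw [show (1/2 : ℝ) = 2⁻¹ by norm_num, Real.log_inv]
  have e2 : Real.log (1 / 16 : ℝ) = -(4 * Real.log 2) := by
    rw [show (1/16 : ℝ) = ((2:ℝ) ^ (4:ℕ))⁻¹ by norm_num, Real.log_inv, Real.log_pow]
    push_cast; ring
  rw [e1] at hla; rw [e2] at hlb
  linarith

lemma case_two (x a s : ℝ) (hx9 : 1 / 9 ≤ x) (hx : 0 < x) (hs : 0 < s)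
    (hs16 : s < 1 / 16) (has : a + s = 1) (hdiff2 : 2 * x ≤ a - s) :
    0 < 4 + Real.log a + Real.log s + x * (a - s) * (1 + a * s) / (a ^ 2 * s ^ 2) := by
  have ha15 : (15:ℝ)/16 < a := by linarith
  have ha0 : (0:ℝ) < a := by linarith
  have h2 : a ≤ 1 := by linarith
  have hloga : 1 - a⁻¹ ≤ Real.log a := by
    have h := Real.log_le_sub_one_of_pos (show (0:ℝ) < a⁻¹ by positivity)
    rw [Real.log_inv] at h
    linarith
  have hainv : a⁻¹ ≤ 16/15 := by
    have h := one_div_le_one_div_of_le (show (0:ℝ) < 15/16 by norm_num) ha15.le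
    rw [one_div] at h
    linarith
  have hloga' : -(1/15 : ℝ) ≤ Real.log a := by linarith
  have hlogs : -(1 / (Real.exp 1 * s)) ≤ Real.log s := neg_inv_le_log s hs
  have he : (2.7182818283 : ℝ) < Real.exp 1 := Real.exp_one_gt_d9
  have hterm : 2 * x ^ 2 / s ^ 2 ≤ x * (a - s) * (1 + a * s) / (a ^ 2 * s ^ 2) := by
    rw [div_le_div_iff₀ (by positivity) (by positivity)]
    have ha2 : a ^ 2 ≤ 1 := by nlinarith
    have e1 : 2 * x ^ 2 * a ^ 2 ≤ 2 * x ^ 2 := by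
      nlinarith [mul_nonneg (sq_nonneg x) (show (0:ℝ) ≤ 1 - a ^ 2 by linarith)]
    have has1 : (1:ℝ) ≤ 1 + a * s := by nlinarith [mul_pos ha0 hs]
    have t1 : x * (2 * x) ≤ x * (a - s) := mul_le_mul_of_nonneg_left hdiff2 hx.le
    have t2 : x * (a - s) ≤ x * (a - s) * (1 + a * s) :=
      le_mul_of_one_le_right (mul_nonneg hx.le (by linarith)) has1
    have e2 : 2 * x ^ 2 ≤ x * (a - s) * (1 + a * s) := by nlinarith [t1, t2]
    calc 2 * x ^ 2 * (a ^ 2 * s ^ 2) = 2 * x ^ 2 * a ^ 2 * s ^ 2 := by ring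
      _ ≤ x * (a - s) * (1 + a * s) * s ^ 2 := by
          apply mul_le_mul_of_nonneg_right _ (sq_nonneg s)
          linarith
  have hes : 1 / (Real.exp 1 * s) ≤ 1 / (27 / 10 * s) := by
    apply one_div_le_one_div_of_le (by positivity)
    have hee : (0:ℝ) < Real.exp 1 - 27 / 10 := by linarith
    nlinarith [mul_pos hee hs]
  have hlogs2 : -(1 / (27 / 10 * s)) ≤ Real.log s := by linarith
  have hpoly : 0 < (59/15) * s ^ 2 - (10/27) * s + 2 * x ^ 2 := by
    nlinarith [sq_nonneg (s - 1/21), sq_nonneg (x - 1/9), hx9, hs, hx]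
  have hdiv : 0 < ((59/15) * s ^ 2 - (10/27) * s + 2 * x ^ 2) / s ^ 2 :=
    div_pos hpoly (by positivity)
  have heq2 : ((59/15) * s ^ 2 - (10/27) * s + 2 * x ^ 2) / s ^ 2
      = 59/15 - 1 / (27 / 10 * s) + 2 * x ^ 2 / s ^ 2 := by
    field_simp
  rw [heq2] at hdiv
  linarith

lemma deriv_pos (x t : ℝ) (ht : 1 / 2 < t) (hx : 0 < x) (hs : 0 < 1 - t - x)
    (hcase : 1 / 16 ≤ 1 - t - x ∨ 1 / 9 ≤ x) :
    0 < -((t + x) / (1 - t - x) - Real.log (1 - t - x))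
        + (1 - t) * (1 / (1 - t - x) ^ 2 + 1 / (1 - t - x))
        - ((1 - t - x) / (t + x) - Real.log (t + x))
        + t * (1 / (t + x) ^ 2 + 1 / (t + x)) := by
  have ha : (0:ℝ) < t + x := by linarith
  have hane : t + x ≠ 0 := ne_of_gt ha
  have hsne : 1 - t - x ≠ 0 := ne_of_gt hs
  have key : -((t + x) / (1 - t - x) - Real.log (1 - t - x))
        + (1 - t) * (1 / (1 - t - x) ^ 2 + 1 / (1 - t - x))
        - ((1 - t - x) / (t + x) - Real.log (t + x))
        + t * (1 / (t + x) ^ 2 + 1 / (t + x))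
      = 4 + Real.log (t + x) + Real.log (1 - t - x)
        + x * ((t + x) - (1 - t - x)) * (1 + (t + x) * (1 - t - x))
            / ((t + x) ^ 2 * (1 - t - x) ^ 2) := by
    field_simp
    ring
  rw [key]
  by_cases hc : 1 / 16 ≤ 1 - t - x
  · exact case_one x (t + x) (1 - t - x) hx (by linarith) hc (by linarith) hs
  · push_neg at hc
    have hx9 : 1 / 9 ≤ x := hcase.resolve_left (by linarith)
    exact case_two x (t + x) (1 - t - x) hx9 hx hs hc (by ring) (by linarith)

lemma mu_half_bound (x : ℝ) (hx1 : 0 < x) (hx9 : x < 1/9) :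
    mu (1/2) x ≤ (36/7) * x + (1/2) * (x - 1/2) + (1/2) * (18/7 - 1) := by
  have hB : (7:ℝ)/18 ≤ 1/2 - x := by linarith
  have hB0 : (0:ℝ) < 1/2 - x := by linarith
  have hA0 : (0:ℝ) < 1/2 + x := by linarith
  have hAne : (1/2 + x : ℝ) ≠ 0 := ne_of_gt hA0
  have hBne : (1/2 - x : ℝ) ≠ 0 := ne_of_gt hB0
  have hmu2 : mu (1/2) x = (1/2) * ((1/2 + x) / (1/2 - x) - Real.log (1/2 - x))
      - (1/2) * ((1/2 - x) / (1/2 + x) - Real.log (1/2 + x)) := by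
    unfold mu
    norm_num
  have keyuv : ∀ u v : ℝ, u ≠ 0 → v ≠ 0 →
      (1/2) * (u / v) - (1/2) * (v / u) = ((u^2 - v^2)/2) / (u * v) := by
    intro u v hu hv
    field_simp
  have hU1 : (1/2) * ((1/2 + x) / (1/2 - x)) - (1/2) * ((1/2 - x) / (1/2 + x))
      = x / ((1/2 + x) * (1/2 - x)) := by
    have h := keyuv (1/2 + x) (1/2 - x) hAne hBne
    have e : (((1/2 + x)^2 - (1/2 - x)^2)/2 : ℝ) = x := by ring
    rw [e] at h
    exact h
  have hU2 : x / ((1/2 + x) * (1/2 - x)) ≤ (36/7) * x := by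
    rw [div_le_iff₀ (mul_pos hA0 hB0)]
    nlinarith [mul_nonneg (mul_nonneg hx1.le hx1.le) (show (0:ℝ) ≤ 1/9 - x by linarith),
      mul_nonneg hx1.le (show (0:ℝ) ≤ 1/9 - x by linarith)]
  have hU3 : Real.log (1/2 + x) ≤ x - 1/2 := by
    have h := Real.log_le_sub_one_of_pos hA0
    linarith
  have hU4 : -Real.log (1/2 - x) ≤ (1/2 - x)⁻¹ - 1 := by
    have h := Real.log_le_sub_one_of_pos (show (0:ℝ) < (1/2 - x)⁻¹ by positivity)
    rw [Real.log_inv] at h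
    linarith
  have hBinv : (1/2 - x)⁻¹ ≤ 18/7 := by
    have h := one_div_le_one_div_of_le (show (0:ℝ) < 7/18 by norm_num) hB
    rw [one_div] at h
    linarith
  rw [hmu2]
  have hsplit : (1/2) * ((1/2 + x) / (1/2 - x) - Real.log (1/2 - x))
      - (1/2) * ((1/2 - x) / (1/2 + x) - Real.log (1/2 + x))
      = ((1/2) * ((1/2 + x) / (1/2 - x)) - (1/2) * ((1/2 - x) / (1/2 + x)))
        + (1/2) * (-Real.log (1/2 - x)) + (1/2) * Real.log (1/2 + x) := by ring
  rw [hsplit, hU1]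
  linarith

lemma mu_low_bound (w x : ℝ) (hw1 : 1 / 2 < w) (hw2 : w < 1) (hx1 : 0 < x)
    (hb : 0 < 1 - w - x) (hb16 : 1 - w - x < 1/16) :
    (w + x) + 15 * x - 2/15 ≤ mu w x := by
  have ha : (15:ℝ)/16 < w + x := by linarith
  have ha1 : w + x < 1 := by linarith
  have ha0 : (0:ℝ) < w + x := by linarith
  have hlogb_neg : Real.log (1 - w - x) < 0 := Real.log_neg hb (by linarith)
  have hloga_neg : Real.log (w + x) < 0 := Real.log_neg ha0 ha1
  have hloga : 1 - (w + x)⁻¹ ≤ Real.log (w + x) := by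
    have h := Real.log_le_sub_one_of_pos (show (0:ℝ) < (w + x)⁻¹ by positivity)
    rw [Real.log_inv] at h
    linarith
  have hainv : (w + x)⁻¹ ≤ 16/15 := by
    have h := one_div_le_one_div_of_le (show (0:ℝ) < 15/16 by norm_num) ha.le
    rw [one_div] at h
    linarith
  have hab : (15:ℝ) ≤ (w + x) / (1 - w - x) := by
    rw [le_div_iff₀ hb]
    nlinarith
  have hsplit : (1 - w) * ((w + x) / (1 - w - x))
      = (w + x) + x * ((w + x) / (1 - w - x)) := by
    field_simp
    ring
  have hxab : 15 * x ≤ x * ((w + x) / (1 - w - x)) := by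
    nlinarith [mul_le_mul_of_nonneg_left hab hx1.le]
  have hT1 : (w + x) + 15 * x ≤ (1 - w) * ((w + x) / (1 - w - x) - Real.log (1 - w - x)) := by
    have h1 : (1 - w) * ((w + x) / (1 - w - x))
        ≤ (1 - w) * ((w + x) / (1 - w - x) - Real.log (1 - w - x)) := by
      apply mul_le_mul_of_nonneg_left _ (by linarith : (0:ℝ) ≤ 1 - w)
      linarith
    linarith [hsplit ▸ h1, hxab]
  have hba : (1 - w - x) / (w + x) ≤ 1/15 := by
    rw [div_le_iff₀ ha0]
    nlinarith
  have hba0 : 0 ≤ (1 - w - x) / (w + x) := div_nonneg hb.le ha0.le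
  have hT2 : w * ((1 - w - x) / (w + x) - Real.log (w + x)) ≤ 2/15 := by
    have hP : 0 ≤ (1 - w - x) / (w + x) - Real.log (w + x) := by linarith
    have h1 : w * ((1 - w - x) / (w + x) - Real.log (w + x))
        ≤ 1 * ((1 - w - x) / (w + x) - Real.log (w + x)) :=
      mul_le_mul_of_nonneg_right hw2.le hP
    have h2 : -Real.log (w + x) ≤ 1/15 := by linarith
    linarith
  unfold mu
  linarith [hT1, hT2]

theorem stmt_11 (w x : ℝ) (hw1 : 1 / 2 < w) (hw2 : w < 1)
    (hx1 : 0 < x) (hx2 : x < 1 - w) :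
    mu (1 / 2) x < mu w x := by
  have hb : (0:ℝ) < 1 - w - x := by linarith
  by_cases hcase : 1 / 16 ≤ 1 - w - x ∨ 1 / 9 ≤ x
  · -- monotone case
    have hmono : StrictMonoOn (fun t => mu t x) (Set.Icc (1/2) w) := by
      apply strictMonoOn_of_deriv_pos (convex_Icc _ _)
      · intro t ht
        simp only [Set.mem_Icc] at ht
        have h1 : 0 < t + x := by linarith [ht.1]
        have h2 : t + x < 1 := by linarith [ht.2]
        exact (mu_hasDeriv x t h1 h2).differentiableAt.continuousAt.continuousWithinAt
      · intro t ht
        rw [interior_Icc, Set.mem_Ioo] at ht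
        have h1 : 0 < t + x := by linarith [ht.1]
        have h2 : t + x < 1 := by linarith [ht.2]
        rw [(mu_hasDeriv x t h1 h2).deriv]
        apply deriv_pos x t ht.1 hx1 (by linarith [ht.2])
        rcases hcase with h | h
        · left; linarith [ht.2]
        · right; exact h
    have h12 : (1/2 : ℝ) ∈ Set.Icc (1/2 : ℝ) w := Set.mem_Icc.mpr ⟨le_refl _, hw1.le⟩
    have hww : w ∈ Set.Icc (1/2 : ℝ) w := Set.mem_Icc.mpr ⟨hw1.le, le_refl _⟩
    exact hmono h12 hww hw1
  · -- direct case
    push_neg at hcase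
    obtain ⟨hb16, hx9⟩ := hcase
    have h1 := mu_half_bound x hx1 hx9
    have h2 := mu_low_bound w x hw1 hw2 hx1 hb hb16
    have ha : (15:ℝ)/16 < w + x := by linarith
    linarith
end

section
/- Fix 1/2 ≤ α_2 < α_1 < 1 and 0 ≤ ε < α_1 - α_2, and set E = (α_1 + α_2 + ε)/2 and F = (α_1 + α_2 - ε)/2. Then α_2 < F ≤ E < α_1, E + F = α_1 + α_2, and T_FL(α_1, α_2, ε) := (1-α_1)[E/(1-E) - log(1-E)] - α_1[(1-E)/E - log E] + (1-α_2)[F/(1-F) - log(1-F)] - α_2[(1-F)/F - log F] is strictly positive. -/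
set_option maxHeartbeats 400000

open Real Set

lemma log_chord {y : ℝ} (h1 : 1/2 ≤ y) (h2 : y ≤ 1) :
    2 * Real.log 2 * (y - 1) ≤ Real.log y := by
  have hc := (strictConcaveOn_log_Ioi.concaveOn).2
      (show (1/2:ℝ) ∈ Ioi (0:ℝ) by norm_num)
      (show (1:ℝ) ∈ Ioi (0:ℝ) by norm_num)
      (show (0:ℝ) ≤ 2 - 2*y by linarith)
      (show (0:ℝ) ≤ 2*y - 1 by linarith)
      (show (2 - 2*y) + (2*y - 1) = 1 by ring)
  simp only [smul_eq_mul, Real.log_one, mul_zero, mul_one] at hc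
  have h12 : ((2 - 2*y) * (1/2) + (2*y - 1)) = y := by ring
  rw [h12] at hc
  have hlog : Real.log (1/2) = -Real.log 2 := by
    rw [one_div, Real.log_inv]
  nlinarith [hc]

lemma stmt_13_aux (α₁ α₂ E F : ℝ) (hα₂ : α₂ = F - (α₁ - E))
    (hFlo : 1/2 < F) (hFE : F ≤ E) (hEα : E < α₁) (h3 : α₁ < 1) :
    0 < (1 - α₁) * (E / (1 - E) - Real.log (1 - E))
        - α₁ * ((1 - E) / E - Real.log E)
        + (1 - α₂) * (F / (1 - F) - Real.log (1 - F))
        - α₂ * ((1 - F) / F - Real.log F) := by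
  have hElo : 1/2 < E := lt_of_lt_of_le hFlo hFE
  have hEhi : E < 1 := lt_trans hEα h3
  have hFhi : F < 1 := lt_of_le_of_lt hFE hEhi
  have hE0 : (0:ℝ) < E := by linarith
  have hF0 : (0:ℝ) < F := by linarith
  have h1E : (0:ℝ) < 1 - E := by linarith
  have h1F : (0:ℝ) < 1 - F := by linarith
  set lE := Real.log E with hlEdef
  set l1E := Real.log (1 - E) with hl1Edef
  set lF := Real.log F with hlFdef
  set l1F := Real.log (1 - F) with hl1Fdef
  set L := Real.log 2 with hLdef
  have hL1 : L ≤ 1 := by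
    rw [hLdef]
    have := Real.log_le_sub_one_of_pos (show (0:ℝ) < 2 by norm_num)
    linarith
  have hL0 : 0 < L := by rw [hLdef]; exact Real.log_pos (by norm_num)
  have hlE_chord : 2 * L * (E - 1) ≤ lE := log_chord (by linarith) (by linarith)
  have hlF_chord : 2 * L * (F - 1) ≤ lF := log_chord (by linarith) (by linarith)
  have hl1F : l1F ≤ -L := by
    rw [hl1Fdef, hLdef]
    have h := Real.log_le_log h1F (show 1 - F ≤ 1/2 by linarith)
    rwa [show Real.log (1/2) = -Real.log 2 by rw [one_div, Real.log_inv]] at h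
  have hquarter : Real.log (1/4 : ℝ) = -(2*L) := by
    rw [hLdef, show (1/4 : ℝ) = ((1:ℝ)/2)^2 by norm_num, Real.log_pow,
      show Real.log (1/2) = -Real.log 2 by rw [one_div, Real.log_inv]]
    push_cast; ring
  have hlogE_prod : lE + l1E ≤ -(2*L) := by
    rw [hlEdef, hl1Edef, ← Real.log_mul (ne_of_gt hE0) (ne_of_gt h1E), ← hquarter]
    exact Real.log_le_log (by positivity) (by nlinarith)
  have hlogF_prod : lF + l1F ≤ -(2*L) := by
    rw [hlFdef, hl1Fdef, ← Real.log_mul (ne_of_gt hF0) (ne_of_gt h1F), ← hquarter]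
    exact Real.log_le_log (by positivity) (by nlinarith)
  have hinvE : E⁻¹ ≤ 3 - 2*E := by
    rw [show E⁻¹ = 1/E from (one_div E).symm, div_le_iff₀ hE0]
    nlinarith
  have hG : 0 ≤ (3+2*L) - (2+2*L)*E + lE - E⁻¹ := by linarith
  have hpsiF : 0 ≤ 2*F - 1 + F*lF - (1-F)*l1F := by
    have e1 : F*(2*L*(F-1)) ≤ F*lF := mul_le_mul_of_nonneg_left hlF_chord hF0.le
    have e2 : (1-F)*l1F ≤ (1-F)*(-L) := mul_le_mul_of_nonneg_left hl1F h1F.le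
    have e3 : 0 ≤ (2*F-1)*(1 - L*(1-F)) := by
      apply mul_nonneg (by linarith)
      have h := mul_le_mul_of_nonneg_right hL1 h1F.le
      linarith
    linarith [e1, e2, e3]
  have hQE : 0 < (1-E)/E + E/(1-E) - lE - l1E - (2+2*L) := by
    have halg : (1-E)/E + E/(1-E) - 2 = (2*E-1)^2/(E*(1-E)) := by
      field_simp; ring
    have hpos : 0 < (2*E-1)^2/(E*(1-E)) := by
      apply div_pos (by nlinarith) (by positivity)
    linarith
  have hQF : 0 ≤ (1-F)/F + F/(1-F) - lF - l1F - (2+2*L) := by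
    have halg : (1-F)/F + F/(1-F) - 2 = (2*F-1)^2/(F*(1-F)) := by
      field_simp; ring
    have hpos : 0 ≤ (2*F-1)^2/(F*(1-F)) := by positivity
    linarith
  have hmd : 0 < 1 - α₁ := by linarith
  have hd : 0 < α₁ - E := by linarith
  have hid : (1 - α₁) * (E / (1 - E) - l1E) - α₁ * ((1 - E) / E - lE)
        + (1 - α₂) * (F / (1 - F) - l1F) - α₂ * ((1 - F) / F - lF)
      = ((3+2*L) - (2+2*L)*E + lE - E⁻¹) + (2*F - 1 + F*lF - (1-F)*l1F)
        + ((1-α₁) * ((1-E)/E + E/(1-E) - lE - l1E - (2+2*L))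
          + (α₁-E) * ((1-F)/F + F/(1-F) - lF - l1F - (2+2*L))) := by
    rw [hα₂]
    field_simp
    ring
  rw [hid]
  have t1 := mul_pos hmd hQE
  have t2 := mul_nonneg hd.le hQF
  linarith

theorem stmt_13 (α₁ α₂ ε : ℝ)
    (h1 : 1 / 2 ≤ α₂) (h2 : α₂ < α₁) (h3 : α₁ < 1)
    (h4 : 0 ≤ ε) (h5 : ε < α₁ - α₂) :
    α₂ < (α₁ + α₂ - ε) / 2 ∧
    (α₁ + α₂ - ε) / 2 ≤ (α₁ + α₂ + ε) / 2 ∧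
    (α₁ + α₂ + ε) / 2 < α₁ ∧
    (α₁ + α₂ + ε) / 2 + (α₁ + α₂ - ε) / 2 = α₁ + α₂ ∧
    0 < (1 - α₁) * (((α₁ + α₂ + ε) / 2) / (1 - (α₁ + α₂ + ε) / 2)
            - Real.log (1 - (α₁ + α₂ + ε) / 2))
        - α₁ * ((1 - (α₁ + α₂ + ε) / 2) / ((α₁ + α₂ + ε) / 2)
            - Real.log ((α₁ + α₂ + ε) / 2))
        + (1 - α₂) * (((α₁ + α₂ - ε) / 2) / (1 - (α₁ + α₂ - ε) / 2)
            - Real.log (1 - (α₁ + α₂ - ε) / 2))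
        - α₂ * ((1 - (α₁ + α₂ - ε) / 2) / ((α₁ + α₂ - ε) / 2)
            - Real.log ((α₁ + α₂ - ε) / 2)) := by
  refine ⟨by linarith, by linarith, by linarith, by ring, ?_⟩
  exact stmt_13_aux α₁ α₂ ((α₁ + α₂ + ε) / 2) ((α₁ + α₂ - ε) / 2)
    (by ring) (by linarith) (by linarith) (by linarith) h3
end
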